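/- Let A be a set, k ≥ 1, and θ ⊆ A^(2^k) be (k)-reflexive (faces_i(θ) quasireflexive for all i < k). Let γ ∈ θ, let n ≥ 1, let i < n, and define ζ_i(γ) ∈ A^((n+1)^k) by ζ_i(γ)_f = γ_{(χ(f₀),…,χ(f_{k-1}))} where χ(m) = 0 if m ≤ i and χ(m) = 1 if m > i. Then every unit cell Cell_f(ζ_i(γ)) for f ∈ n^k belongs to the closure of {γ} under the reflexivity maps refl_j^ε (j < k, ε ∈ {0,1}); in particular if θ is closed under all refl_j^ε, then Cell_f(ζ_i(γ)) ∈ θ for all f ∈ n^k. -/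
import Mathlib


/-- `j`-th face of a `k`-cube in direction `i`, encoded as the cube constant in
direction `i`. -/
def face {A : Type*} {k : ℕ} (i : Fin k) (j : Fin 2) (γ : (Fin k → Fin 2) → A) :
    (Fin k → Fin 2) → A :=
  fun f => γ (Function.update f i j)

def facesRel {A : Type*} {k : ℕ} (i : Fin k) (θ : Set ((Fin k → Fin 2) → A)) :
    Set (((Fin k → Fin 2) → A) × ((Fin k → Fin 2) → A)) :=
  {p | ∃ γ ∈ θ, p.1 = face i 0 γ ∧ p.2 = face i 1 γ}

/-- `refl_j^ε(δ)(h) = δ(h[j ↦ ε])`. -/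
def reflMap {A : Type*} {k : ℕ} (j : Fin k) (ε : Fin 2) (δ : (Fin k → Fin 2) → A) :
    (Fin k → Fin 2) → A :=
  fun h => δ (Function.update h j ε)

/-- `ζ_i(γ)_f = γ_{(χ_{[i+1,∞)}(f₀),…,χ_{[i+1,∞)}(f_{k-1}))}`. -/
def zeta {A : Type*} (k n : ℕ) (i : ℕ) (γ : (Fin k → Fin 2) → A) :
    (Fin k → Fin (n + 1)) → A :=
  fun f => γ (fun j => if (f j).val ≤ i then 0 else 1)

/-- The unit cell of a complex at position `f ∈ n^k`. -/
def Cell {A : Type*} {k n : ℕ} (f : Fin k → Fin n) (ζ : (Fin k → Fin (n + 1)) → A) :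
    (Fin k → Fin 2) → A :=
  fun g => ζ (fun j => ⟨(f j).val + (g j).val, by
    have := (f j).isLt; have := (g j).isLt; omega⟩)

/-- The closure of `{γ}` under the reflexivity maps `refl_j^ε`. -/
inductive ReflCl {A : Type*} {k : ℕ} (γ : (Fin k → Fin 2) → A) :
    ((Fin k → Fin 2) → A) → Prop
  | base : ReflCl γ γ
  | step (j : Fin k) (ε : Fin 2) {δ} : ReflCl γ δ → ReflCl γ (reflMap j ε δ)

lemma reflCl_freeze {A : Type*} {k : ℕ} (γ : (Fin k → Fin 2) → A)
    (s : Finset (Fin k)) (c : Fin k → Fin 2) :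
    ReflCl γ (fun g => γ (fun j => if j ∈ s then c j else g j)) := by
  induction s using Finset.induction with
  | empty => simpa using ReflCl.base
  | @insert a s ha ih =>
    have : (fun g => γ (fun j => if j ∈ insert a s then c j else g j))
        = reflMap a (c a) (fun g => γ (fun j => if j ∈ s then c j else g j)) := by
      funext g
      congr 1
      funext j
      by_cases hj : j ∈ s
      · simp [hj, Finset.mem_insert, reflMap]
      · by_cases hja : j = a
        · subst hja; simp [ha, reflMap]
        · simp [hj, hja, reflMap, Function.update_of_ne hja]
    rw [this]
    exact ReflCl.step a (c a) ih

theorem stmt_14 {A : Type*} (k : ℕ) (hk : 1 ≤ k) (θ : Set ((Fin k → Fin 2) → A))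
    (hrefl : ∀ i : Fin k, ∀ a b, (a, b) ∈ facesRel i θ →
      (a, a) ∈ facesRel i θ ∧ (b, b) ∈ facesRel i θ)
    (γ : (Fin k → Fin 2) → A) (hγ : γ ∈ θ)
    (n : ℕ) (hn : 1 ≤ n) (i : ℕ) (hi : i < n) :
    (∀ f : Fin k → Fin n, ReflCl γ (Cell f (zeta k n i γ))) ∧
      ((∀ δ ∈ θ, ∀ (j : Fin k) (ε : Fin 2), reflMap j ε δ ∈ θ) →
        ∀ f : Fin k → Fin n, Cell f (zeta k n i γ) ∈ θ) := by
  have key : ∀ f : Fin k → Fin n, ReflCl γ (Cell f (zeta k n i γ)) := by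
    intro f
    have heq : Cell f (zeta k n i γ)
        = (fun g => γ (fun j => if j ∈ Finset.filter (fun j => (f j).val ≠ i) Finset.univ
            then (if (f j).val ≤ i then 0 else 1) else g j)) := by
      funext g
      unfold Cell zeta
      congr 1
      funext j
      simp only [Finset.mem_filter, Finset.mem_univ, true_and]
      by_cases h : (f j).val = i
      · conv_rhs => rw [if_neg (by simp [h])]
        have hg2 := (g j).isLt
        split <;> (refine (Fin.ext ?_).symm) <;>
          simp only [Fin.val_zero, Fin.val_one] <;> omega
      · have hg := (g j).isLt
        rcases Nat.lt_or_ge (f j).val i with hlt | hge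
        · have : (f j).val + (g j).val ≤ i := by omega
          simp [h, this, Nat.le_of_lt hlt]
        · have h1 : ¬ (f j).val + (g j).val ≤ i := by omega
          have h2 : ¬ (f j).val ≤ i := by omega
          simp [h, h1, h2]
    rw [heq]
    exact reflCl_freeze γ _ _
  refine ⟨key, fun hcl f => ?_⟩
  have : ∀ δ, ReflCl γ δ → δ ∈ θ := by
    intro δ h
    induction h with
    | base => exact hγ
    | step j ε _ ih => exact hcl _ ih j ε
  exact this _ (key f)
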